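/- arXiv:1404.1850 — 2 statements merged into one kernel-verified Lean document; each statement's English description precedes it below -/
import Mathlib

section
/- For every integer n ≥ 2, ‖n‖ ≥ (3 / log 3) · log n, where log is the natural logarithm. -/
/-- `IsSumProduct k n` means the positive integer `n` can be written as a
sum-product expression using exactly `k` ones, additions, multiplications
and parentheses. -/
inductive IsSumProduct : ℕ → ℕ → Prop
  | one : IsSumProduct 1 1
  | add {j k a b : ℕ} : IsSumProduct j a → IsSumProduct k b →
      IsSumProduct (j + k) (a + b)
  | mul {j k a b : ℕ} : IsSumProduct j a → IsSumProduct k b →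
      IsSumProduct (j + k) (a * b)

/-- The complexity `‖n‖` of a positive integer `n`: the least number of 1's
needed to express `n` using only 1's, addition, multiplication and
parentheses. -/
noncomputable def complexity (n : ℕ) : ℕ := sInf {k | IsSumProduct k n}

/-!
Every expression with `k` ones evaluates to at most `3 ^ (k / 3)`, i.e. `n ^ 3 ≤ 3 ^ k`. This
is proved by induction on the expression: products are immediate, and a sum `a + b` is bounded
by `a * b` unless one summand is `1`, where `(1 + b) ^ 3 ≤ 3 * b ^ 3` for `b ≥ 3` and the cases
`b = 1, 2` are checked by hand. Taking logarithms gives the bound.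
-/

namespace IsSumProduct

theorem pos {k n : ℕ} (h : IsSumProduct k n) : 0 < k ∧ 0 < n := by
  induction h with
  | one => exact ⟨one_pos, one_pos⟩
  | add _ _ iha ihb => omega
  | mul _ _ iha ihb => exact ⟨by omega, Nat.mul_pos iha.2 ihb.2⟩

theorem self : ∀ {n : ℕ}, 0 < n → IsSumProduct n n
  | 1, _ => one
  | n + 2, _ => show IsSumProduct (n + 1 + 1) (n + 1 + 1) from add (self n.succ_pos) one

end IsSumProduct

theorem one_add_pow_three_le {b k : ℕ} (hb : 0 < b) (hk : 0 < k) (h : b ^ 3 ≤ 3 ^ k) :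
    (1 + b) ^ 3 ≤ 3 ^ (k + 1) := by
  rw [pow_succ]
  obtain rfl | rfl | hb3 : b = 1 ∨ b = 2 ∨ 3 ≤ b := by omega
  · calc (1 + 1) ^ 3 ≤ 3 ^ 1 * 3 := by norm_num
      _ ≤ 3 ^ k * 3 := by gcongr <;> omega
  · have hk2 : 2 ≤ k := by
      by_contra! hk1
      interval_cases k
      norm_num at h
    calc (1 + 2) ^ 3 ≤ 3 ^ 2 * 3 := by norm_num
      _ ≤ 3 ^ k * 3 := by gcongr; norm_num
  · calc (1 + b) ^ 3 ≤ b ^ 3 * 3 := by nlinarith [Nat.mul_le_mul hb3 hb3]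
      _ ≤ 3 ^ k * 3 := by gcongr

theorem add_pow_three_le {a b j k : ℕ} (ha : 0 < a) (hb : 0 < b) (hj : 0 < j) (hk : 0 < k)
    (haj : a ^ 3 ≤ 3 ^ j) (hbk : b ^ 3 ≤ 3 ^ k) : (a + b) ^ 3 ≤ 3 ^ (j + k) := by
  wlog hab : a ≤ b generalizing a b j k
  · rw [add_comm a, add_comm j]
    exact this hb ha hk hj hbk haj (by omega)
  obtain rfl | ha2 : a = 1 ∨ 2 ≤ a := by omega
  · calc (1 + b) ^ 3 ≤ 3 ^ (k + 1) := one_add_pow_three_le hb hk hbk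
      _ ≤ 3 ^ (j + k) := Nat.pow_le_pow_right (by norm_num) (by omega)
  · calc (a + b) ^ 3 ≤ (a * b) ^ 3 := by gcongr; exact Nat.add_le_mul ha2 (by omega)
      _ = a ^ 3 * b ^ 3 := mul_pow a b 3
      _ ≤ 3 ^ j * 3 ^ k := by gcongr
      _ = 3 ^ (j + k) := (pow_add 3 j k).symm

theorem IsSumProduct.pow_three_le {k n : ℕ} (h : IsSumProduct k n) : n ^ 3 ≤ 3 ^ k := by
  induction h with
  | one => norm_num
  | add ha hb iha ihb => exact add_pow_three_le ha.pos.2 hb.pos.2 ha.pos.1 hb.pos.1 iha ihb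
  | @mul j k a b _ _ iha ihb =>
    calc (a * b) ^ 3 = a ^ 3 * b ^ 3 := mul_pow a b 3
      _ ≤ 3 ^ j * 3 ^ k := Nat.mul_le_mul iha ihb
      _ = 3 ^ (j + k) := (pow_add 3 j k).symm

theorem isSumProduct_complexity {n : ℕ} (hn : 0 < n) : IsSumProduct (complexity n) n :=
  Nat.sInf_mem (s := {k | IsSumProduct k n}) ⟨n, IsSumProduct.self hn⟩

theorem complexity_lower_bound (n : ℕ) (hn : 2 ≤ n) :
    (complexity n : ℝ) ≥ 3 / Real.log 3 * Real.log n := by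
  have hcube : (n : ℝ) ^ 3 ≤ 3 ^ complexity n := by
    exact_mod_cast (isSumProduct_complexity (by omega)).pow_three_le
  have hlog : 3 * Real.log n ≤ complexity n * Real.log 3 := by
    simpa only [Real.log_pow, Nat.cast_ofNat] using
      Real.log_le_log (by positivity) hcube
  rw [ge_iff_le, div_mul_eq_mul_div, div_le_iff₀ (Real.log_pos (by norm_num))]
  exact hlog
end

section
/- ‖5^6‖ = ‖15625‖ ≤ 29 < 30 = 6·‖5‖; in particular the complexity is not multiplicative on prime powers for p = 5. -/
theorem IsSumProduct.pos_s12 {k n : ℕ} (h : IsSumProduct k n) : 0 < k ∧ 0 < n := by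
  induction h with
  | one => omega
  | add _ _ ih₁ ih₂ => omega
  | mul _ _ ih₁ ih₂ => exact ⟨by omega, Nat.mul_pos ih₁.2 ih₂.2⟩

theorem succ_pow_three_le {b y : ℕ} (hb : 0 < b) (hy : 0 < y) (hby : b ^ 3 ≤ 3 ^ y) :
    (b + 1) ^ 3 ≤ 3 ^ (y + 1) := by
  rw [pow_succ 3 y]
  rcases (by omega : b = 1 ∨ b = 2 ∨ 3 ≤ b) with rfl | rfl | hb3
  · have : 3 ^ 1 ≤ 3 ^ y := Nat.pow_le_pow_right (by norm_num) hy
    omega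
  · -- `8 ≤ 3 ^ y` already forces `9 ≤ 3 ^ y`, which is exactly what `27 ≤ 3 * 3 ^ y` needs.
    have hy : 2 ≤ y := by
      by_contra! hy
      interval_cases y; norm_num at hby
    have : 3 ^ 2 ≤ 3 ^ y := Nat.pow_le_pow_right (by norm_num) hy
    omega
  · nlinarith [pow_le_pow_left₀ (Nat.zero_le 3) hb3 2]

theorem add_pow_three_le_s12 {a b x y : ℕ} (ha : 0 < a) (hb : 0 < b) (hx : 0 < x) (hy : 0 < y)
    (hax : a ^ 3 ≤ 3 ^ x) (hby : b ^ 3 ≤ 3 ^ y) : (a + b) ^ 3 ≤ 3 ^ (x + y) := by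
  rcases (by omega : a = 1 ∨ b = 1 ∨ (2 ≤ a ∧ 2 ≤ b)) with rfl | rfl | ⟨ha2, hb2⟩
  · calc (1 + b) ^ 3 = (b + 1) ^ 3 := by ring
      _ ≤ 3 ^ (y + 1) := succ_pow_three_le hb hy hby
      _ ≤ 3 ^ (x + y) := Nat.pow_le_pow_right (by norm_num) (by omega)
  · calc (a + 1) ^ 3 ≤ 3 ^ (x + 1) := succ_pow_three_le ha hx hax
      _ ≤ 3 ^ (x + y) := Nat.pow_le_pow_right (by norm_num) (by omega)
  · have : a + b ≤ a * b := by nlinarith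
    calc (a + b) ^ 3 ≤ (a * b) ^ 3 := Nat.pow_le_pow_left this 3
      _ = a ^ 3 * b ^ 3 := mul_pow a b 3
      _ ≤ 3 ^ x * 3 ^ y := Nat.mul_le_mul hax hby
      _ = 3 ^ (x + y) := (pow_add 3 x y).symm

theorem complexity_le {k n : ℕ} (h : IsSumProduct k n) : complexity n ≤ k :=
  Nat.sInf_le h

theorem pow_three_le_three_pow_complexity {k n : ℕ} (h : IsSumProduct k n) :
    n ^ 3 ≤ 3 ^ complexity n :=
  (Nat.sInf_mem (s := {k | IsSumProduct k n}) ⟨k, h⟩).pow_three_le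

theorem isSumProduct_five : IsSumProduct 5 5 :=
  .add .one (.add .one (.add .one (.add .one .one)))

theorem complexity_five : complexity 5 = 5 := by
  refine le_antisymm (complexity_le isSumProduct_five) ?_
  by_contra! hlt
  have h125 : 5 ^ 3 ≤ 3 ^ 4 :=
    (pow_three_le_three_pow_complexity isSumProduct_five).trans
      (Nat.pow_le_pow_right (by norm_num) (by omega))
  norm_num at h125

theorem isSumProduct_15625 : IsSumProduct 29 15625 := by
  have h2 : IsSumProduct 2 2 := .add .one .one
  have h3 : IsSumProduct 3 3 := .add .one h2
  have h72 : IsSumProduct 12 72 := h2.mul (h2.mul (h2.mul (h3.mul h3)))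
  have h217 : IsSumProduct 16 217 := .add .one (h2.mul (h2.mul (h2.mul (h3.mul (h3.mul h3)))))
  exact .add .one (h72.mul h217)

theorem complexity_five_pow_six :
    complexity (5 ^ 6) = complexity 15625 ∧ complexity 15625 ≤ 29 ∧
    complexity 15625 < 6 * complexity 5 ∧ 6 * complexity 5 = 30 := by
  have h29 : complexity 15625 ≤ 29 := complexity_le isSumProduct_15625
  rw [complexity_five]
  exact ⟨by norm_num, h29, by omega, rfl⟩
end
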